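/- If every nonzero element of the i-th contraction space C_i(T) of a tensor T has tensor rank at least d, and T is i-concise with dim V_i = k, then the tensor rank of T is at least the minimum length N_q(k,d) of a linear code over F_q of dimension k and minimum Hamming distance at least d. -/

import Mathlib

/-!
Take a decomposition `T = ∑_{j < R} v_{j1} ⊗ ⋯ ⊗ v_{jt}` of minimal length `R`. Contracting it
with `f ∈ V_i^∨` gives `∑_j f(v_{ji}) w_j` with pure tensors `w_j`, so the contraction map
factors through the codeword map `f ↦ (f(v_{ji}))_j ∈ F^R`. Conciseness makes the contraction injective, so the code
has dimension `k`; and a nonzero codeword of weight `w` gives a nonzero contraction of rank at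
most `w`, hence `d ≤ w`.
-/

open scoped TensorProduct
open PiTensorProduct

/-- The contraction of a `t`-fold tensor by a dual vector in the `i`-th factor,
as a multilinear map on the factors. -/
noncomputable def contrMultilinear {ι : Type*} [Fintype ι] [DecidableEq ι]
    {F : Type*} [Field F] {V : ι → Type*} [∀ k, AddCommGroup (V k)] [∀ k, Module F (V k)]
    (i : ι) (f : Module.Dual F (V i)) :
    MultilinearMap F V (⨂[F] k : {k // k ≠ i}, V k) where
  toFun v := f (v i) • (tprod F (s := fun k : {k // k ≠ i} => V k.1)) (fun k => v k.1)
  map_update_add' := by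
    intro _ v j x y
    by_cases h : j = i
    · subst h
      have hupd : ∀ z : V j, (fun k : {k // k ≠ j} => Function.update v j z k.1)
          = fun k : {k // k ≠ j} => v k.1 := by
        intro z; funext k; exact Function.update_of_ne k.2 z v
      simp only [Function.update_self, hupd, map_add, add_smul]
    · have h1 : ∀ z : V j, Function.update v j z i = v i :=
        fun z => Function.update_of_ne (Ne.symm h) z v
      have h2 : ∀ z : V j, (fun k : {k // k ≠ i} => Function.update v j z k.1)
          = Function.update (fun k : {k // k ≠ i} => v k.1) ⟨j, h⟩ z := by
        intro z; funext k
        rcases eq_or_ne k (⟨j, h⟩ : {k // k ≠ i}) with rfl | hk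
        · simp
        · have : k.1 ≠ j := fun hkj => hk (Subtype.ext hkj)
          rw [Function.update_of_ne this, Function.update_of_ne hk]
      simp only [h1, h2, MultilinearMap.map_update_add, smul_add]
  map_update_smul' := by
    intro _ v j c x
    by_cases h : j = i
    · subst h
      have hupd : ∀ z : V j, (fun k : {k // k ≠ j} => Function.update v j z k.1)
          = fun k : {k // k ≠ j} => v k.1 := by
        intro z; funext k; exact Function.update_of_ne k.2 z v
      simp only [Function.update_self, hupd, map_smul, smul_assoc]
    · have h1 : ∀ z : V j, Function.update v j z i = v i :=
        fun z => Function.update_of_ne (Ne.symm h) z v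
      have h2 : ∀ z : V j, (fun k : {k // k ≠ i} => Function.update v j z k.1)
          = Function.update (fun k : {k // k ≠ i} => v k.1) ⟨j, h⟩ z := by
        intro z; funext k
        rcases eq_or_ne k (⟨j, h⟩ : {k // k ≠ i}) with rfl | hk
        · simp
        · have : k.1 ≠ j := fun hkj => hk (Subtype.ext hkj)
          rw [Function.update_of_ne this, Function.update_of_ne hk]
      simp only [h1, h2, MultilinearMap.map_update_smul]
      exact smul_comm _ _ _

/-- Contraction of the `i`-th factor of a `t`-fold tensor by a dual vector `f ∈ Vᵢ^∨`. -/
noncomputable def contr {ι : Type*} [Fintype ι] [DecidableEq ι]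
    {F : Type*} [Field F] {V : ι → Type*} [∀ k, AddCommGroup (V k)] [∀ k, Module F (V k)]
    (i : ι) (f : Module.Dual F (V i)) :
    (⨂[F] k, V k) →ₗ[F] ⨂[F] k : {k // k ≠ i}, V k :=
  PiTensorProduct.lift (contrMultilinear i f)

/-- The tensor rank of a tensor: the minimum number `R` such that the tensor is a sum of
`R` pure tensors. -/
noncomputable def tensorRank {ι : Type*} [Fintype ι] {F : Type*} [Field F]
    {V : ι → Type*} [∀ k, AddCommGroup (V k)] [∀ k, Module F (V k)]
    (T : ⨂[F] k, V k) : ℕ :=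
  sInf {R | ∃ v : Fin R → Π k, V k, T = ∑ j, tprod F (v j)}

/-- `N_q(k, d)`: the minimum possible length of a linear code over the field `F` of
dimension `k` and minimum Hamming distance at least `d`. -/
noncomputable def minCodeLength (F : Type*) [Field F] [DecidableEq F] (k d : ℕ) : ℕ :=
  sInf {R | ∃ C : Submodule F (Fin R → F), Module.finrank F C = k ∧
    ∀ c ∈ C, c ≠ 0 → d ≤ hammingNorm c}

section TensorRank

variable {ι : Type*} {F : Type*} [Field F]
  {V : ι → Type*} [∀ k, AddCommGroup (V k)] [∀ k, Module F (V k)]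

lemma smul_tprod_eq_tprod_update [DecidableEq ι] (i : ι) (c : F) (u : Π k, V k) :
    c • tprod F u = tprod F (Function.update u i (c • u i)) := by
  simp

lemma exists_eq_sum_tprod [Nonempty ι] (T : ⨂[F] k, V k) :
    ∃ (R : ℕ) (v : Fin R → Π k, V k), T = ∑ j, tprod F (v j) := by
  classical
  have hT : T ∈ Submodule.span F (Set.range (tprod F (s := V))) := by
    rw [PiTensorProduct.span_tprod_eq_top]; trivial
  obtain ⟨n, c, u, hsum⟩ := Submodule.mem_span_set'.1 hT
  choose u' hu' using fun j => (u j).2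
  obtain ⟨i⟩ := ‹Nonempty ι›
  refine ⟨n, fun j => Function.update (u' j) i (c j • u' j i), ?_⟩
  rw [← hsum]
  exact Finset.sum_congr rfl fun j _ => by rw [← hu' j, smul_tprod_eq_tprod_update i]

lemma tprod_ne_zero_of_isEmpty [IsEmpty ι] (u : Π k, V k) : tprod F u ≠ 0 := fun h => by
  simpa using congrArg (PiTensorProduct.isEmptyEquiv ι) h

-- Over an empty index set the tensor product is the line `F`, spanned by the empty pure tensor.
lemma exists_smul_eq_tprod_of_isEmpty [IsEmpty ι] {x : ⨂[F] k, V k} (hx : x ≠ 0)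
    (u : Π k, V k) : ∃ a : F, a • x = tprod F u := by
  set e := PiTensorProduct.isEmptyEquiv ι (R := F) (s := V)
  refine ⟨(e x)⁻¹, e.injective ?_⟩
  rw [map_smul, PiTensorProduct.isEmptyEquiv_apply_tprod, smul_eq_mul,
    inv_mul_cancel₀ (e.map_ne_zero_iff.2 hx)]

variable [Fintype ι]

lemma tensorRank_sum_tprod_le {J : Type*} (s : Finset J) (u : J → Π k, V k) :
    tensorRank (∑ j ∈ s, tprod F (u j)) ≤ s.card := by
  refine Nat.sInf_le ⟨fun m => u (s.equivFin.symm m), ?_⟩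
  rw [← Finset.sum_attach s (fun j => tprod F (u j))]
  exact Fintype.sum_equiv s.equivFin _ _ fun _ => by simp

lemma tensorRank_tprod_le_one (u : Π k, V k) : tensorRank (tprod F u) ≤ 1 := by
  simpa using tensorRank_sum_tprod_le {()} fun _ => u

lemma tensorRank_sum_smul_tprod_le [DecidableEq F] [Nonempty ι] {J : Type*} [Fintype J]
    (c : J → F) (u : J → Π k, V k) :
    tensorRank (∑ j, c j • tprod F (u j)) ≤ hammingNorm c := by
  classical
  obtain ⟨i⟩ := ‹Nonempty ι›
  rw [← Finset.sum_filter_of_ne (p := fun j => c j ≠ 0) fun j _ hj hc => hj (by simp [hc])]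
  simp only [smul_tprod_eq_tprod_update i]
  exact tensorRank_sum_tprod_le _ _

lemma exists_eq_sum_tprod_of_tensorRank [Nonempty ι] (T : ⨂[F] k, V k) :
    ∃ v : Fin (tensorRank T) → Π k, V k, T = ∑ j, tprod F (v j) := by
  obtain ⟨R, v, hv⟩ := exists_eq_sum_tprod T
  exact Nat.sInf_mem (s := {R | ∃ v : Fin R → Π k, V k, T = ∑ j, tprod F (v j)}) ⟨R, v, hv⟩

end TensorRank

lemma LinearMap.injective_of_finrank_range_eq {K M N : Type*} [DivisionRing K]
    [AddCommGroup M] [Module K M] [FiniteDimensional K M] [AddCommGroup N] [Module K N]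
    (f : M →ₗ[K] N) (h : Module.finrank K (LinearMap.range f) = Module.finrank K M) :
    Function.Injective f := by
  have := f.finrank_range_add_finrank_ker
  rw [← LinearMap.ker_eq_bot, ← Submodule.finrank_eq_zero]
  omega

section Contraction

variable {ι : Type*} [Fintype ι] [DecidableEq ι] {F : Type*} [Field F]
  {V : ι → Type*} [∀ k, AddCommGroup (V k)] [∀ k, Module F (V k)]

lemma contr_tprod (i : ι) (f : Module.Dual F (V i)) (u : Π k, V k) :
    contr i f (tprod F u) = f (u i) • tprod F (fun k : {k // k ≠ i} => u k.1) :=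
  PiTensorProduct.lift.tprod u

omit [Fintype ι] [DecidableEq ι] in
/-- Its range is the code `C_i` of the decomposition `v`. -/
def codewordMap {J : Type*} (v : J → Π k, V k) (i : ι) :
    Module.Dual F (V i) →ₗ[F] (J → F) :=
  LinearMap.pi fun j => LinearMap.applyₗ (v j i)

lemma contr_sum_tprod {J : Type*} [Fintype J] (v : J → Π k, V k) (i : ι)
    (f : Module.Dual F (V i)) :
    contr i f (∑ j, tprod F (v j)) = Fintype.linearCombination F
      (fun j => tprod F fun k : {k // k ≠ i} => v j k.1) (codewordMap v i f) := by
  simp only [map_sum, contr_tprod, Fintype.linearCombination_apply]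
  rfl

theorem minCodeLength_le_of_eq_sum_tprod [DecidableEq F] {T : ⨂[F] k, V k} {R : ℕ}
    (v : Fin R → Π k, V k) (hT : T = ∑ j, tprod F (v j)) (i : ι)
    [FiniteDimensional F (V i)] {k d : ℕ} (hk : Module.finrank F (V i) = k)
    (hconcise : Module.finrank F
        (Submodule.span F {S | ∃ f : Module.Dual F (V i), S = contr i f T})
      = Module.finrank F (V i))
    (hd : ∀ f : Module.Dual F (V i), contr i f T ≠ 0 → d ≤ tensorRank (contr i f T)) :
    minCodeLength F k d ≤ R := by
  set w := fun j => tprod F fun k : {k // k ≠ i} => v j k.1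
  set ψ := Fintype.linearCombination F w ∘ₗ codewordMap v i
  have hψ : ∀ f, ψ f = contr i f T := fun f => by rw [hT, contr_sum_tprod]; rfl
  have hψ_inj : Function.Injective ψ := by
    refine ψ.injective_of_finrank_range_eq ?_
    have hrange : Set.range ψ = {S | ∃ f : Module.Dual F (V i), S = contr i f T} := by
      ext S; simp [hψ, eq_comm]
    rw [Subspace.dual_finrank_eq, ← hconcise, ← hrange, ← LinearMap.coe_range,
      Submodule.span_eq]
  have hcode_inj : Function.Injective (codewordMap v i) :=
    Function.Injective.of_comp (f := Fintype.linearCombination F w) hψ_inj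
  refine Nat.sInf_le ⟨LinearMap.range (codewordMap v i), ?_, ?_⟩
  · rw [LinearMap.finrank_range_of_inj hcode_inj, Subspace.dual_finrank_eq, hk]
  rintro _ ⟨f, rfl⟩ hc
  have hf : contr i f T ≠ 0 := by
    rw [← hψ, ← map_zero ψ, hψ_inj.ne_iff]
    rintro rfl
    exact hc (map_zero _)
  rcases isEmpty_or_nonempty {k // k ≠ i} with hempty | hnonempty
  · -- Some rescaling of `f` contracts `T` to the empty pure tensor, of rank at most one.
    obtain ⟨a, ha⟩ := exists_smul_eq_tprod_of_isEmpty hf isEmptyElim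
    rw [← hψ, ← map_smul, hψ] at ha
    calc d ≤ tensorRank (contr i (a • f) T) := hd _ (ha ▸ tprod_ne_zero_of_isEmpty _)
      _ ≤ 1 := ha ▸ tensorRank_tprod_le_one _
      _ ≤ hammingNorm (codewordMap v i f) := hammingNorm_pos_iff.2 hc
  · calc d ≤ tensorRank (contr i f T) := hd f hf
      _ = tensorRank (∑ j, codewordMap v i f j • w j) := by
        rw [← hψ]; rfl
      _ ≤ hammingNorm (codewordMap v i f) := tensorRank_sum_smul_tprod_le _ _

end Contraction

theorem stmt_4_general {t : ℕ} {F : Type*} [Field F] [DecidableEq F]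
    {V : Fin t → Type*}
    [∀ k, AddCommGroup (V k)] [∀ k, Module F (V k)] [∀ k, FiniteDimensional F (V k)]
    (T : ⨂[F] k, V k) (i : Fin t) (k d : ℕ)
    (hk : Module.finrank F (V i) = k)
    (hconcise : Module.finrank F
        (Submodule.span F {S | ∃ f : Module.Dual F (V i), S = contr i f T})
      = Module.finrank F (V i))
    (hd : ∀ f : Module.Dual F (V i), contr i f T ≠ 0 → d ≤ tensorRank (contr i f T)) :
    minCodeLength F k d ≤ tensorRank T := by
  have : Nonempty (Fin t) := ⟨i⟩
  obtain ⟨v, hv⟩ := exists_eq_sum_tprod_of_tensorRank T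
  exact minCodeLength_le_of_eq_sum_tprod v hv i hk hconcise hd

/-- If every nonzero element of the `i`-th contraction space `C_i(T)` of a
tensor `T` has tensor rank at least `d`, and `T` is `i`-concise with `dim V_i = k`, then the
tensor rank of `T` is at least `N_q(k, d)`. -/
theorem stmt_4 {t : ℕ} {F : Type*} [Field F] [Fintype F] [DecidableEq F]
    {V : Fin t → Type*}
    [∀ k, AddCommGroup (V k)] [∀ k, Module F (V k)] [∀ k, FiniteDimensional F (V k)]
    (T : ⨂[F] k, V k) (i : Fin t) (k d : ℕ)
    (hk : Module.finrank F (V i) = k)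
    (hconcise : Module.finrank F
        (Submodule.span F {S | ∃ f : Module.Dual F (V i), S = contr i f T})
      = Module.finrank F (V i))
    (hd : ∀ f : Module.Dual F (V i), contr i f T ≠ 0 → d ≤ tensorRank (contr i f T)) :
    minCodeLength F k d ≤ tensorRank T :=
  stmt_4_general T i k d hk hconcise hd
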